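/- arXiv:2511.02772 — 3 statements merged into one kernel-verified Lean document; each statement's English description precedes it below -/
import Mathlib

section
/- Let g be a ℂ-linear map on d×d complex matrices which sends density matrices to density matrices, and let φ : Fin d → ℂ be a unit vector such that g((1/d) • 1) = φφᴴ. Then for every orthonormal basis (v₁, …, v_d) of ℂ^d, one has g(vᵢvᵢᴴ) = φφᴴ for every i. -/
open Matrix ComplexOrder

lemma outer_posSemidef {d : ℕ} (x : Fin d → ℂ) :
    (Matrix.vecMulVec x (star x)).PosSemidef := by
  apply PosSemidef.of_dotProduct_mulVec_nonneg
  · ext a b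
    simp [Matrix.vecMulVec_apply, conjTranspose_apply, mul_comm]
  · intro y
    have h1 : (Matrix.vecMulVec x (star x)) *ᵥ y = (star x ⬝ᵥ y) • x := by
      ext a
      simp only [Matrix.mulVec, Matrix.vecMulVec_apply, dotProduct, Pi.smul_apply, smul_eq_mul,
        Finset.sum_mul]
      exact Finset.sum_congr rfl fun b _ => by ring
    rw [h1]
    have h2 : star y ⬝ᵥ ((star x ⬝ᵥ y) • x) = (star x ⬝ᵥ y) * star (star x ⬝ᵥ y) := by
      rw [dotProduct_smul, smul_eq_mul]
      congr 1
      rw [Matrix.star_dotProduct]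
    rw [h2]
    exact mul_star_self_nonneg _

set_option maxHeartbeats 1000000 in
theorem stmt_5 (d : ℕ)
    (g : Matrix (Fin d) (Fin d) ℂ →ₗ[ℂ] Matrix (Fin d) (Fin d) ℂ)
    (hg : ∀ ρ : Matrix (Fin d) (Fin d) ℂ, ρ.PosSemidef → ρ.trace = 1 →
      (g ρ).PosSemidef ∧ (g ρ).trace = 1)
    (φ : Fin d → ℂ) (hφ : ∑ i, ‖φ i‖ ^ 2 = (1 : ℝ))
    (hmax : g ((1 / (d : ℂ)) • (1 : Matrix (Fin d) (Fin d) ℂ)) = Matrix.vecMulVec φ (star φ))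
    (v : Fin d → (Fin d → ℂ))
    (hv : ∀ i j, dotProduct (star (v i)) (v j) = if i = j then (1 : ℂ) else 0) :
    ∀ i, g (Matrix.vecMulVec (v i) (star (v i))) = Matrix.vecMulVec φ (star φ) := by
  intro i
  have hd : (d : ℂ) ≠ 0 := by
    have : 0 < d := Fin.pos i
    exact_mod_cast Nat.cast_ne_zero.mpr this.ne'
  set P : Matrix (Fin d) (Fin d) ℂ := Matrix.vecMulVec φ (star φ) with hP
  -- norm of φ
  have hφ1 : star φ ⬝ᵥ φ = 1 := by
    have : star φ ⬝ᵥ φ = ((∑ i, ‖φ i‖ ^ 2 : ℝ) : ℂ) := by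
      push_cast
      simp only [dotProduct, Pi.star_apply]
      congr 1
      ext a
      rw [Complex.star_def, mul_comm, Complex.mul_conj,
        Complex.normSq_eq_norm_sq]
      push_cast
      ring
    rw [this, hφ]
    norm_num
  -- completeness of the basis
  have hsum : ∑ j, Matrix.vecMulVec (v j) (star (v j)) = (1 : Matrix (Fin d) (Fin d) ℂ) := by
    set V : Matrix (Fin d) (Fin d) ℂ := Matrix.of fun a j => v j a with hV
    have h1 : Vᴴ * V = 1 := by
      ext a b
      simpa [Matrix.mul_apply, hV, conjTranspose_apply, dotProduct, Matrix.one_apply]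
        using hv a b
    have h2 : V * Vᴴ = 1 := mul_eq_one_comm.mp h1
    calc ∑ j, Matrix.vecMulVec (v j) (star (v j)) = V * Vᴴ := by
          ext a b
          simp [Matrix.mul_apply, hV, Matrix.sum_apply, Matrix.vecMulVec_apply,
            conjTranspose_apply]
      _ = 1 := h2
  -- each basis state is a density matrix
  have hdens : ∀ j, (g (Matrix.vecMulVec (v j) (star (v j)))).PosSemidef ∧
      (g (Matrix.vecMulVec (v j) (star (v j)))).trace = 1 := by
    intro j
    refine hg _ (outer_posSemidef _) ?_
    have : (Matrix.vecMulVec (v j) (star (v j))).trace = star (v j) ⬝ᵥ v j := by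
      simp [Matrix.trace, Matrix.diag, Matrix.vecMulVec_apply, dotProduct, mul_comm]
    rw [this, hv j j]
    simp
  have hg1 : g 1 = (d : ℂ) • P := by
    have h1 : ((d : ℂ)) • ((1 / (d : ℂ)) • (1 : Matrix (Fin d) (Fin d) ℂ)) = 1 := by
      rw [smul_smul]
      field_simp
      exact one_smul _ _
    calc g 1 = g (((d : ℂ)) • ((1 / (d : ℂ)) • 1)) := by rw [h1]
      _ = (d : ℂ) • g ((1 / (d : ℂ)) • 1) := by rw [g.map_smul]
      _ = (d : ℂ) • P := by rw [hmax]
  have hsumg : ∑ j, g (Matrix.vecMulVec (v j) (star (v j))) = (d : ℂ) • P := by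
    rw [← map_sum, hsum, hg1]
  set A : Matrix (Fin d) (Fin d) ℂ := g (Matrix.vecMulVec (v i) (star (v i))) with hA
  have hApsd : A.PosSemidef := (hdens i).1
  have hAtr : A.trace = 1 := (hdens i).2
  -- B = dP - A is PSD
  have hBpsd : ((d : ℂ) • P - A).PosSemidef := by
    have : (d : ℂ) • P - A = ∑ j ∈ Finset.univ.erase i, g (Matrix.vecMulVec (v j) (star (v j))) := by
      rw [← hsumg, ← Finset.add_sum_erase _ _ (Finset.mem_univ i), ← hA]
      exact add_sub_cancel_left _ _
    rw [this]
    apply Finset.sum_induction _ Matrix.PosSemidef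
      (fun a b ha hb => ha.add hb) Matrix.PosSemidef.zero
    intro j _
    exact (hdens j).1
  -- A kills vectors orthogonal to φ
  have hker : ∀ ψ : Fin d → ℂ, star φ ⬝ᵥ ψ = 0 → A *ᵥ ψ = 0 := by
    intro ψ hψ
    have hPψ : P *ᵥ ψ = 0 := by
      ext a
      have : P *ᵥ ψ = (star φ ⬝ᵥ ψ) • φ := by
        ext a
        simp only [hP, Matrix.mulVec, Matrix.vecMulVec_apply, dotProduct, Pi.smul_apply,
          smul_eq_mul, Finset.sum_mul]
        exact Finset.sum_congr rfl fun b _ => by ring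
      rw [this, hψ]
      simp
    have h1 : 0 ≤ star ψ ⬝ᵥ A *ᵥ ψ := hApsd.dotProduct_mulVec_nonneg ψ
    have h2 : star ψ ⬝ᵥ A *ᵥ ψ ≤ 0 := by
      have := hBpsd.dotProduct_mulVec_nonneg ψ
      rw [Matrix.sub_mulVec, dotProduct_sub, Matrix.smul_mulVec, hPψ] at this
      simp only [smul_zero, dotProduct_zero, zero_sub] at this
      exact neg_nonneg.mp this
    exact (hApsd.dotProduct_mulVec_zero_iff ψ).mp (le_antisymm h2 h1)
  -- columns of A
  set w : Fin d → ℂ := A *ᵥ φ with hw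
  have hcol : ∀ a b, A a b = (starRingEnd ℂ) (φ b) * w a := by
    intro a b
    have hψ : star φ ⬝ᵥ ((Pi.single b 1 : Fin d → ℂ) - (starRingEnd ℂ) (φ b) • φ) = 0 := by
      rw [dotProduct_sub, dotProduct_smul, hφ1]
      simp [dotProduct, Pi.single_apply, mul_comm, Finset.sum_ite_eq']
    have h0 := hker _ hψ
    rw [Matrix.mulVec_sub, sub_eq_zero] at h0
    have h2 := congrFun h0 a
    simp only [Matrix.mulVec_single_one, Matrix.col_apply, mul_one, Matrix.mulVec_smul, Pi.smul_apply,
      smul_eq_mul] at h2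
    rw [h2, hw]
  -- trace condition
  have htr : ∑ a, (starRingEnd ℂ) (φ a) * w a = 1 := by
    have : A.trace = ∑ a, (starRingEnd ℂ) (φ a) * w a := by
      rw [Matrix.trace]
      congr 1
      ext a
      exact hcol a a
    rw [← this, hAtr]
  -- Hermitian relation gives w = φ
  have hherm : ∀ a b, A a b = (starRingEnd ℂ) (A b a) := by
    intro a b
    have := congrFun (congrFun hApsd.isHermitian a) b
    rw [conjTranspose_apply] at this
    exact this.symm
  have hwφ : ∀ a, w a = φ a := by
    intro a
    have key : ∀ b, (starRingEnd ℂ) (φ b) * w a = φ a * (starRingEnd ℂ) (w b) := by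
      intro b
      rw [← hcol a b, hherm a b, hcol b a, _root_.map_mul, Complex.conj_conj]
    have h1 : ∑ b, φ b * ((starRingEnd ℂ) (φ b) * w a)
        = ∑ b, φ b * (φ a * (starRingEnd ℂ) (w b)) := by
      congr 1; ext b; rw [key b]
    have h2 : ∑ b, φ b * ((starRingEnd ℂ) (φ b) * w a) = w a := by
      have : ∑ b, φ b * ((starRingEnd ℂ) (φ b) * w a)
          = (∑ b, (starRingEnd ℂ) (φ b) * φ b) * w a := by
        rw [Finset.sum_mul]; congr 1; ext b; ring
      rw [this]
      have hφ1' : (∑ b, (starRingEnd ℂ) (φ b) * φ b) = 1 := by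
        simpa [dotProduct] using hφ1
      rw [hφ1', one_mul]
    have h3 : ∑ b, φ b * (φ a * (starRingEnd ℂ) (w b)) = φ a := by
      have : ∑ b, φ b * (φ a * (starRingEnd ℂ) (w b))
          = φ a * (starRingEnd ℂ) (∑ b, (starRingEnd ℂ) (φ b) * w b) := by
        rw [map_sum, Finset.mul_sum]
        congr 1; ext b
        rw [_root_.map_mul, Complex.conj_conj]
        ring
      rw [this, htr]
      simp
    rw [← h2, h1, h3]
  -- conclude
  ext a b
  rw [hcol a b, hwφ a, hP, Matrix.vecMulVec_apply]
  simp [mul_comm]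
end

section
/- Let g be a ℂ-linear map on d×d complex matrices which sends density matrices to density matrices, and let φ : Fin d → ℂ be a unit vector such that g((1/d) • 1) = φφᴴ. Then g(ρ) = φφᴴ for every density matrix ρ; that is, g is the constant preparation of the pure state φφᴴ on density matrices. -/
open Matrix ComplexOrder

lemma psd_trace_zero {n : ℕ} {A : Matrix (Fin n) (Fin n) ℂ}
    (hA : A.PosSemidef) (h : A.trace = 0) : A = 0 := by
  have hstar : ∀ i : Fin n, star (Pi.single i (1:ℂ) : Fin n → ℂ) = Pi.single i (1:ℂ) := by
    intro i; ext j; simp [Pi.single_apply, apply_ite]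
  have hdnn : ∀ i ∈ Finset.univ, (0:ℂ) ≤ A i i := by
    intro i _
    have := hA.dotProduct_mulVec_nonneg (Pi.single i 1)
    simpa [hstar i] using this
  have hdiag : ∀ i, A i i = 0 := fun i =>
    (Finset.sum_eq_zero_iff_of_nonneg hdnn).mp h i (Finset.mem_univ i)
  ext i j
  have hcol : A *ᵥ Pi.single j 1 = 0 := by
    rw [← hA.dotProduct_mulVec_zero_iff]
    simp [hstar j, hdiag j]
  simpa using congrFun hcol i

lemma vecMulVec_mulVec' {n : ℕ} (φ w v : Fin n → ℂ) :
    vecMulVec φ w *ᵥ v = (w ⬝ᵥ v) • φ := by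
  ext i
  simp only [mulVec, dotProduct, vecMulVec_apply, Pi.smul_apply, smul_eq_mul, Finset.sum_mul]
  exact Finset.sum_congr rfl (fun j _ => by ring)

lemma star_dot_self_eq {n : ℕ} (v : Fin n → ℂ) :
    star v ⬝ᵥ v = ((∑ i, ‖v i‖^2 : ℝ) : ℂ) := by
  rw [Complex.ofReal_sum]
  simp only [dotProduct, Pi.star_apply]
  refine Finset.sum_congr rfl (fun i _ => ?_)
  rw [Complex.star_def, Complex.conj_mul']
  push_cast
  ring

lemma one_sub_psd {n : ℕ} {ρ : Matrix (Fin n) (Fin n) ℂ}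
    (hρ : ρ.PosSemidef) (ht : ρ.trace = 1) :
    (1 - ρ : Matrix (Fin n) (Fin n) ℂ).PosSemidef := by
  have hherm : (1 - ρ : Matrix (Fin n) (Fin n) ℂ).IsHermitian :=
    (isHermitian_one).sub hρ.1
  obtain ⟨B, hB⟩ : ∃ B : Matrix (Fin n) (Fin n) ℂ, ρ = Bᴴ * B := by
    open scoped MatrixOrder Matrix.Norms.L2Operator in
    exact CStarAlgebra.nonneg_iff_eq_star_mul_self.mp hρ.nonneg
  -- trace identity
  have htr : (∑ j, ∑ i, ‖B i j‖^2 : ℝ) = 1 := by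
    have : ρ.trace = ((∑ j, ∑ i, ‖B i j‖^2 : ℝ) : ℂ) := by
      rw [hB]
      simp only [Matrix.trace, Matrix.diag, Matrix.mul_apply, conjTranspose_apply]
      push_cast
      refine Finset.sum_congr rfl (fun j _ => Finset.sum_congr rfl (fun i _ => ?_))
      rw [Complex.star_def, Complex.conj_mul']
    rw [ht] at this
    exact_mod_cast this.symm
  refine PosSemidef.of_dotProduct_mulVec_nonneg hherm (fun x => ?_)
  have hquad : star x ⬝ᵥ (1 - ρ) *ᵥ x = star x ⬝ᵥ x - star (B *ᵥ x) ⬝ᵥ (B *ᵥ x) := by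
    rw [sub_mulVec, dotProduct_sub, one_mulVec, hB, ← Matrix.mulVec_mulVec,
      dotProduct_mulVec, vecMul_conjTranspose, star_star]
  rw [hquad, star_dot_self_eq, star_dot_self_eq, ← Complex.ofReal_sub]
  rw [Complex.zero_le_real, sub_nonneg]
  -- Cauchy-Schwarz
  have hCS : ∀ i, ‖(B *ᵥ x) i‖^2 ≤ (∑ j, ‖B i j‖^2) * (∑ j, ‖x j‖^2) := by
    intro i
    have h := norm_inner_le_norm (𝕜 := ℂ)
      ((WithLp.equiv 2 (Fin n → ℂ)).symm (star (B i)))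
      ((WithLp.equiv 2 (Fin n → ℂ)).symm x)
    have hinner : inner (𝕜 := ℂ) ((WithLp.equiv 2 (Fin n → ℂ)).symm (star (B i)))
        ((WithLp.equiv 2 (Fin n → ℂ)).symm x) = (B *ᵥ x) i := by
      simp [EuclideanSpace.inner_eq_star_dotProduct]
      simp [dotProduct, mulVec, dotProduct, mul_comm]
    rw [hinner] at h
    have hu : ‖((WithLp.equiv 2 (Fin n → ℂ)).symm (star (B i)))‖
        = Real.sqrt (∑ j, ‖B i j‖^2) := by
      rw [EuclideanSpace.norm_eq]; simp
    have hx' : ‖((WithLp.equiv 2 (Fin n → ℂ)).symm x)‖ = Real.sqrt (∑ j, ‖x j‖^2) := by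
      rw [EuclideanSpace.norm_eq]; rfl
    calc ‖(B *ᵥ x) i‖^2 ≤ (‖((WithLp.equiv 2 (Fin n → ℂ)).symm (star (B i)))‖
          * ‖((WithLp.equiv 2 (Fin n → ℂ)).symm x)‖)^2 :=
        pow_le_pow_left₀ (norm_nonneg _) h 2
      _ = (∑ j, ‖B i j‖^2) * (∑ j, ‖x j‖^2) := by
        rw [hu, hx', mul_pow, Real.sq_sqrt, Real.sq_sqrt] <;>
          exact Finset.sum_nonneg (fun j _ => sq_nonneg _)
  calc (∑ i, ‖(B *ᵥ x) i‖^2) ≤ ∑ i, (∑ j, ‖B i j‖^2) * (∑ j, ‖x j‖^2) :=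
        Finset.sum_le_sum (fun i _ => hCS i)
    _ = (∑ i, ∑ j, ‖B i j‖^2) * (∑ j, ‖x j‖^2) := by rw [Finset.sum_mul]
    _ = (∑ j, ∑ i, ‖B i j‖^2) * (∑ j, ‖x j‖^2) := by rw [Finset.sum_comm]
    _ = ∑ j, ‖x j‖^2 := by rw [htr, one_mul]
theorem stmt_6 (d : ℕ)
    (g : Matrix (Fin d) (Fin d) ℂ →ₗ[ℂ] Matrix (Fin d) (Fin d) ℂ)
    (hg : ∀ ρ : Matrix (Fin d) (Fin d) ℂ, ρ.PosSemidef → ρ.trace = 1 →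
      (g ρ).PosSemidef ∧ (g ρ).trace = 1)
    (φ : Fin d → ℂ) (hφ : ∑ i, ‖φ i‖ ^ 2 = (1 : ℝ))
    (hmax : g ((1 / (d : ℂ)) • (1 : Matrix (Fin d) (Fin d) ℂ)) = Matrix.vecMulVec φ (star φ)) :
    ∀ ρ : Matrix (Fin d) (Fin d) ℂ, ρ.PosSemidef → ρ.trace = 1 →
      g ρ = Matrix.vecMulVec φ (star φ) := by
  intro ρ hρ hρt
  have hd : d ≠ 0 := by
    rintro rfl
    rw [Matrix.trace_eq_zero_of_isEmpty] at hρt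
    exact one_ne_zero hρt.symm
  have hdC : (d:ℂ) ≠ 0 := Nat.cast_ne_zero.mpr hd
  have hφ1 : star φ ⬝ᵥ φ = 1 := by
    rw [star_dot_self_eq, hφ, Complex.ofReal_one]
  set P := Matrix.vecMulVec φ (star φ) with hPdef
  have hg1 : g 1 = (d:ℂ) • P := by
    have h2 : (1/(d:ℂ)) • g 1 = P := by rw [← LinearMap.map_smul, hmax]
    calc g 1 = (d:ℂ) • ((1/(d:ℂ)) • g 1) := by
          rw [smul_smul, mul_one_div, div_self hdC, one_smul]
      _ = (d:ℂ) • P := by rw [h2]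
  obtain ⟨hApsd, hAtr⟩ := hg ρ hρ hρt
  set A := g ρ with hAdef
  set σ : Matrix (Fin d) (Fin d) ℂ := 1 - ρ with hσdef
  have hσpsd : σ.PosSemidef := one_sub_psd hρ hρt
  have hsum : A + g σ = (d:ℂ) • P := by
    rw [hAdef, ← map_add, hσdef, add_sub_cancel, hg1]
  have hYnn : ∀ v, 0 ≤ star v ⬝ᵥ (g σ) *ᵥ v := by
    set c : ℝ := ((d-1:ℕ):ℝ) with hcdef
    have hm : σ.trace = (c:ℂ) := by
      rw [hσdef, trace_sub, trace_one, hρt, hcdef]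
      push_cast [Nat.cast_sub (Nat.one_le_iff_ne_zero.mpr hd)]
      simp
    by_cases hc : σ.trace = 0
    · intro v
      have h0 : σ = 0 := psd_trace_zero hσpsd hc
      rw [h0, map_zero]
      simp
    · intro v
      have hcnn : (0:ℝ) ≤ c := Nat.cast_nonneg _
      have hcne : ((c:ℝ):ℂ) ≠ 0 := by rw [← hm]; exact hc
      have hτpsd : (((c:ℝ):ℂ)⁻¹ • σ).PosSemidef := by
        refine PosSemidef.of_dotProduct_mulVec_nonneg ?_ ?_
        · rw [IsHermitian, conjTranspose_smul, hσpsd.1]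
          congr 1
          rw [← Complex.ofReal_inv]
          exact Complex.conj_ofReal _
        · intro x
          rw [smul_mulVec, dotProduct_smul, smul_eq_mul]
          refine mul_nonneg ?_ (hσpsd.dotProduct_mulVec_nonneg x)
          rw [← Complex.ofReal_inv, Complex.zero_le_real]
          positivity
      have hτtr : (((c:ℝ):ℂ)⁻¹ • σ).trace = 1 := by
        rw [trace_smul, hm, smul_eq_mul, inv_mul_cancel₀ hcne]
      obtain ⟨hτ1, _⟩ := hg _ hτpsd hτtr
      have hgτ := hτ1.dotProduct_mulVec_nonneg v
      rw [LinearMap.map_smul g, smul_mulVec, dotProduct_smul, smul_eq_mul] at hgτ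
      have hQ : star v ⬝ᵥ (g σ) *ᵥ v
          = ((c:ℝ):ℂ) * (((c:ℝ):ℂ)⁻¹ * (star v ⬝ᵥ (g σ) *ᵥ v)) := by
        rw [← mul_assoc, mul_inv_cancel₀ hcne, one_mul]
      rw [hQ]
      exact mul_nonneg (Complex.zero_le_real.mpr hcnn) hgτ
  set α : ℂ := star φ ⬝ᵥ A *ᵥ φ with hα
  have hker : ∀ v, star φ ⬝ᵥ v = 0 → A *ᵥ v = 0 := by
    intro v hv
    have hPv : P *ᵥ v = 0 := by
      rw [hPdef, vecMulVec_mulVec', hv, zero_smul]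
    have hsv : star v ⬝ᵥ A *ᵥ v + star v ⬝ᵥ (g σ) *ᵥ v = 0 := by
      rw [← dotProduct_add, ← add_mulVec, hsum, smul_mulVec, hPv, smul_zero,
        dotProduct_zero]
    have h1 := hApsd.dotProduct_mulVec_nonneg v
    have h2 := hYnn v
    have h3 : star v ⬝ᵥ A *ᵥ v = 0 := le_antisymm (by
      calc star v ⬝ᵥ A *ᵥ v ≤ star v ⬝ᵥ A *ᵥ v + star v ⬝ᵥ (g σ) *ᵥ v :=
            le_add_of_nonneg_right h2
        _ = 0 := hsv) h1
    exact (hApsd.dotProduct_mulVec_zero_iff v).mp h3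
  have hAφ : A *ᵥ φ = α • φ := by
    set u : Fin d → ℂ := A *ᵥ φ - α • φ with hu
    have hφu : star φ ⬝ᵥ u = 0 := by
      rw [hu, dotProduct_sub, dotProduct_smul, hφ1, smul_eq_mul, mul_one, ← hα, sub_self]
    have hAu : A *ᵥ u = 0 := hker u hφu
    have huφ : star u ⬝ᵥ φ = 0 := by
      have e : star u ⬝ᵥ φ = star (star φ ⬝ᵥ u) := by
        simp only [dotProduct, Pi.star_apply, star_sum, star_mul', star_star]
        exact Finset.sum_congr rfl (fun i _ => by ring)
      rw [e, hφu, star_zero]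
    have huA : star u ⬝ᵥ A *ᵥ φ = 0 := by
      rw [dotProduct_mulVec]
      have e : star u ᵥ* A = star (A *ᵥ u) := by
        rw [star_mulVec, hApsd.1]
      rw [e, hAu, star_zero, zero_dotProduct]
    have h0 : star u ⬝ᵥ u = 0 := by
      have e1 : star u ⬝ᵥ u = star u ⬝ᵥ (A *ᵥ φ) - star u ⬝ᵥ (α • φ) := by
        rw [← dotProduct_sub, ← hu]
      rw [e1, huA, dotProduct_smul, huφ, smul_eq_mul, mul_zero, sub_zero]
    have hu0 := dotProduct_star_self_eq_zero.mp h0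
    rw [hu] at hu0
    exact sub_eq_zero.mp hu0
  have hAv : ∀ v, A *ᵥ v = (α * (star φ ⬝ᵥ v)) • φ := by
    intro v
    have hw : star φ ⬝ᵥ (v - (star φ ⬝ᵥ v) • φ) = 0 := by
      rw [dotProduct_sub, dotProduct_smul, hφ1, smul_eq_mul, mul_one, sub_self]
    have h2 := hker _ hw
    rw [mulVec_sub, mulVec_smul, sub_eq_zero] at h2
    rw [h2, hAφ, smul_smul, mul_comm]
  have hAP : A = α • P := by
    ext i j
    have h := congrFun (hAv (Pi.single j 1)) i
    simp only [mulVec_single, mul_one, dotProduct_single, Pi.smul_apply, smul_eq_mul,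
      hPdef, vecMulVec_apply, Pi.star_apply, Matrix.smul_apply, op_smul_eq_mul, col_apply] at h ⊢
    rw [h]; ring
  have htrP : P.trace = 1 := by
    have e : P.trace = star φ ⬝ᵥ φ := by
      simp only [Matrix.trace, Matrix.diag, hPdef, vecMulVec_apply, dotProduct, Pi.star_apply]
      exact Finset.sum_congr rfl (fun i _ => by ring)
    rw [e, hφ1]
  have hα1 : α = 1 := by
    have h := hAtr
    rw [hAP, trace_smul, htrP, smul_eq_mul, mul_one] at h
    exact h
  rw [hAP, hα1, one_smul]
end

section
/- For every d ≥ 2 there exist d×d unitary matrices U₀ and U₁ over ℂ such that the unitary channels differ — i.e. there is a d×d matrix A with U₀ * A * U₀ᴴ ≠ U₁ * A * U₁ᴴ — yet the Choi states ρ_{U₀} and ρ_{U₁} (defined by ρ_U (i,a) (j,b) = (1/d) * (U * E_{ij} * Uᴴ) a b) have equal partial traces over the first factor and equal partial traces over the second factor. -/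
open Matrix

lemma diag_conj_entry (d : ℕ) (u : Fin d → ℂ) (i j a b : Fin d) :
    (((Matrix.diagonal u) * Matrix.single i j 1 * (Matrix.diagonal u)ᴴ : Matrix (Fin d) (Fin d) ℂ)) a b
      = u a * (if i = a ∧ j = b then 1 else 0) * star (u b) := by
  rw [Matrix.diagonal_conjTranspose, Matrix.mul_apply]
  simp only [Matrix.mul_diagonal, Matrix.diagonal_mul, Pi.star_apply]
  rw [Finset.sum_eq_single b]
  · simp [Matrix.single, and_assoc, mul_comm, mul_assoc, mul_left_comm]
  · intro c _ hc
    rw [Matrix.diagonal_apply_ne (star u) hc, mul_zero]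
  · simp

lemma sum_one (d : ℕ) (u : Fin d → ℂ) (hu : ∀ k, u k * star (u k) = 1) (a b : Fin d) :
    (∑ i : Fin d, (1 / (d : ℂ)) *
      ((((Matrix.diagonal u) * Matrix.single i i 1 * (Matrix.diagonal u)ᴴ : Matrix (Fin d) (Fin d) ℂ)) a b))
      = if a = b then 1 / (d : ℂ) else 0 := by
  simp only [diag_conj_entry]
  rcases eq_or_ne a b with h | h
  · subst h
    rw [if_pos rfl, Finset.sum_eq_single a]
    · rw [if_pos ⟨rfl, rfl⟩, mul_one, hu a, mul_one]
    · intro c _ hc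
      rw [if_neg (fun hc2 => hc hc2.1), mul_zero, zero_mul, mul_zero]
    · simp
  · rw [if_neg h]
    apply Finset.sum_eq_zero
    intro c _
    rw [if_neg (fun hc => h (hc.1.symm.trans hc.2)), mul_zero, zero_mul, mul_zero]

lemma sum_two (d : ℕ) (u : Fin d → ℂ) (hu : ∀ k, u k * star (u k) = 1) (i j : Fin d) :
    (∑ a : Fin d, (1 / (d : ℂ)) *
      ((((Matrix.diagonal u) * Matrix.single i j 1 * (Matrix.diagonal u)ᴴ : Matrix (Fin d) (Fin d) ℂ)) a a))
      = if i = j then 1 / (d : ℂ) else 0 := by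
  simp only [diag_conj_entry]
  rcases eq_or_ne i j with h | h
  · subst h
    rw [if_pos rfl, Finset.sum_eq_single i]
    · rw [if_pos ⟨rfl, rfl⟩, mul_one, hu i, mul_one]
    · intro c _ hc
      rw [if_neg (fun hc2 => hc hc2.1.symm), mul_zero, zero_mul, mul_zero]
    · simp
  · rw [if_neg h]
    apply Finset.sum_eq_zero
    intro c _
    rw [if_neg (fun hc => h (hc.1.trans hc.2.symm)), mul_zero, zero_mul, mul_zero]

lemma diag_mem_unitary (d : ℕ) (u : Fin d → ℂ) (hu : ∀ k, star (u k) * u k = 1) :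
    Matrix.diagonal u ∈ Matrix.unitaryGroup (Fin d) ℂ := by
  constructor
  · rw [Matrix.star_eq_conjTranspose, Matrix.diagonal_conjTranspose,
      Matrix.diagonal_mul_diagonal]
    simp only [Pi.star_apply]
    rw [show (fun i => star (u i) * u i) = fun _ => 1 from funext hu, Matrix.diagonal_one]
  · rw [Matrix.star_eq_conjTranspose, Matrix.diagonal_conjTranspose,
      Matrix.diagonal_mul_diagonal]
    have : ∀ k, u k * star (u k) = 1 := fun k => by rw [mul_comm]; exact hu k
    simp only [Pi.star_apply]
    rw [show (fun i => u i * star (u i)) = fun _ => 1 from funext this, Matrix.diagonal_one]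

theorem stmt_12 (d : ℕ) (hd : 2 ≤ d) :
    ∃ U₀ U₁ : Matrix.unitaryGroup (Fin d) ℂ,
      (∃ A : Matrix (Fin d) (Fin d) ℂ,
        (U₀ : Matrix (Fin d) (Fin d) ℂ) * A * (U₀ : Matrix (Fin d) (Fin d) ℂ)ᴴ ≠
        (U₁ : Matrix (Fin d) (Fin d) ℂ) * A * (U₁ : Matrix (Fin d) (Fin d) ℂ)ᴴ) ∧
      (∀ a b : Fin d,
        (∑ i : Fin d, (1 / (d : ℂ)) *
          ((((U₀ : Matrix (Fin d) (Fin d) ℂ) * Matrix.single i i 1 *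
            (U₀ : Matrix (Fin d) (Fin d) ℂ)ᴴ : Matrix (Fin d) (Fin d) ℂ)) a b) =
         ∑ i : Fin d, (1 / (d : ℂ)) *
          ((((U₁ : Matrix (Fin d) (Fin d) ℂ) * Matrix.single i i 1 *
            (U₁ : Matrix (Fin d) (Fin d) ℂ)ᴴ : Matrix (Fin d) (Fin d) ℂ)) a b))) ∧
      (∀ i j : Fin d,
        (∑ a : Fin d, (1 / (d : ℂ)) *
          ((((U₀ : Matrix (Fin d) (Fin d) ℂ) * Matrix.single i j 1 *
            (U₀ : Matrix (Fin d) (Fin d) ℂ)ᴴ : Matrix (Fin d) (Fin d) ℂ)) a a) =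
         ∑ a : Fin d, (1 / (d : ℂ)) *
          ((((U₁ : Matrix (Fin d) (Fin d) ℂ) * Matrix.single i j 1 *
            (U₁ : Matrix (Fin d) (Fin d) ℂ)ᴴ : Matrix (Fin d) (Fin d) ℂ)) a a))) := by
  set u₀ : Fin d → ℂ := fun _ => 1 with hu₀def
  set u₁ : Fin d → ℂ := fun k => if k = ⟨0, by omega⟩ then -1 else 1 with hu₁def
  have hu₀ : ∀ k, u₀ k * star (u₀ k) = 1 := fun k => by simp [hu₀def]
  have hu₁ : ∀ k, u₁ k * star (u₁ k) = 1 := fun k => by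
    simp only [hu₁def]; split <;> simp
  refine ⟨⟨Matrix.diagonal u₀, diag_mem_unitary d u₀ (fun k => by
      rw [mul_comm]; exact hu₀ k)⟩,
    ⟨Matrix.diagonal u₁, diag_mem_unitary d u₁ (fun k => by
      rw [mul_comm]; exact hu₁ k)⟩, ?_, ?_, ?_⟩
  · refine ⟨Matrix.single ⟨0, by omega⟩ ⟨1, by omega⟩ 1, fun h => ?_⟩
    have h2 := congrFun (congrFun h ⟨0, by omega⟩) ⟨1, by omega⟩
    rw [diag_conj_entry, diag_conj_entry] at h2
    have hne : (⟨0, by omega⟩ : Fin d) ≠ ⟨1, by omega⟩ := by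
      intro h3; simpa using congrArg Fin.val h3
    simp only [hu₀def, hu₁def, if_pos rfl, if_neg hne, and_self, if_true] at h2
    norm_num at h2
  · intro a b
    rw [sum_one d u₀ hu₀ a b, sum_one d u₁ hu₁ a b]
  · intro i j
    rw [sum_two d u₀ hu₀ i j, sum_two d u₁ hu₁ i j]
end
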